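/- For every formula A and every Γ ⊆ Σ_A, the set Γ° := ⋃{Σ_B : □B ∈ Γ or ◇B ∈ Γ} is closed; moreover if Γ is closed then Γ° ⊆ Γ, and if in addition Γ is nonempty then the cardinality of Γ° is strictly less than the cardinality of Γ. -/
import Mathlib

inductive Fml : Type
  | atom : ℕ → Fml
  | impl : Fml → Fml → Fml
  | top : Fml
  | bot : Fml
  | and : Fml → Fml → Fml
  | or : Fml → Fml → Fml
  | box : Fml → Fml
  | dia : Fml → Fml
deriving DecidableEq

/-- number of constructors (symbols) in a formula -/
def Fml.len : Fml → ℕ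
  | atom _ => 1
  | impl A B => A.len + B.len + 1
  | top => 1
  | bot => 1
  | and A B => A.len + B.len + 1
  | or A B => A.len + B.len + 1
  | box A => A.len + 1
  | dia A => A.len + 1

/-- a set of formulas is closed under immediate subformulas -/
def ClosedSet (S : Set Fml) : Prop :=
  (∀ A B, Fml.impl A B ∈ S → A ∈ S ∧ B ∈ S) ∧
  (∀ A B, Fml.and A B ∈ S → A ∈ S ∧ B ∈ S) ∧
  (∀ A B, Fml.or A B ∈ S → A ∈ S ∧ B ∈ S) ∧
  (∀ A, Fml.box A ∈ S → A ∈ S) ∧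
  (∀ A, Fml.dia A ∈ S → A ∈ S)

/-- Σ_A : the least closed set of formulas containing A -/
def Sig (A : Fml) : Set Fml := ⋂₀ {S | ClosedSet S ∧ A ∈ S}

/-- Γ° = ⋃ {Σ_B : □B ∈ Γ or ◇B ∈ Γ} -/
def circSet (Γ : Set Fml) : Set Fml :=
  ⋃ B ∈ {B : Fml | Fml.box B ∈ Γ ∨ Fml.dia B ∈ Γ}, Sig B

/-- iterates Γ^α : Γ^0 = Γ, Γ^{α+1} = (Γ^α)° -/
def iterCirc (Γ : Set Fml) : ℕ → Set Fml
  | 0 => Γ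
  | n + 1 => circSet (iterCirc Γ n)

-- auxiliary

def subF : Fml → Finset Fml
  | .atom n => {.atom n}
  | .impl A B => insert (.impl A B) (subF A ∪ subF B)
  | .top => {.top}
  | .bot => {.bot}
  | .and A B => insert (.and A B) (subF A ∪ subF B)
  | .or A B => insert (.or A B) (subF A ∪ subF B)
  | .box A => insert (.box A) (subF A)
  | .dia A => insert (.dia A) (subF A)

lemma self_mem_subF (X : Fml) : X ∈ subF X := by cases X <;> simp [subF]

lemma subF_trans : ∀ X C, C ∈ subF X → subF C ⊆ subF X := by
  intro X
  induction X with
  | atom n => intro C h; simp [subF] at h; subst h; simp [subF]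
  | top => intro C h; simp [subF] at h; subst h; simp [subF]
  | bot => intro C h; simp [subF] at h; subst h; simp [subF]
  | impl A B ihA ihB =>
      intro C h
      simp [subF] at h
      rcases h with h | h | h
      · subst h; exact subset_rfl
      · exact (ihA C h).trans (by intro x hx; simp [subF]; right; left; exact hx)
      · exact (ihB C h).trans (by intro x hx; simp [subF]; right; right; exact hx)
  | and A B ihA ihB =>
      intro C h
      simp [subF] at h
      rcases h with h | h | h
      · subst h; exact subset_rfl
      · exact (ihA C h).trans (by intro x hx; simp [subF]; right; left; exact hx)
      · exact (ihB C h).trans (by intro x hx; simp [subF]; right; right; exact hx)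
  | or A B ihA ihB =>
      intro C h
      simp [subF] at h
      rcases h with h | h | h
      · subst h; exact subset_rfl
      · exact (ihA C h).trans (by intro x hx; simp [subF]; right; left; exact hx)
      · exact (ihB C h).trans (by intro x hx; simp [subF]; right; right; exact hx)
  | box A ihA =>
      intro C h
      simp [subF] at h
      rcases h with h | h
      · subst h; exact subset_rfl
      · exact (ihA C h).trans (by intro x hx; simp [subF]; right; exact hx)
  | dia A ihA =>
      intro C h
      simp [subF] at h
      rcases h with h | h
      · subst h; exact subset_rfl
      · exact (ihA C h).trans (by intro x hx; simp [subF]; right; exact hx)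

lemma subF_closed (X : Fml) : ClosedSet (↑(subF X) : Set Fml) := by
  refine ⟨?_, ?_, ?_, ?_, ?_⟩ <;> intro A
  · intro B h
    have := subF_trans X _ h
    constructor
    · exact this (by simp [subF, self_mem_subF])
    · exact this (by simp [subF, self_mem_subF])
  · intro B h
    have := subF_trans X _ h
    constructor
    · exact this (by simp [subF, self_mem_subF])
    · exact this (by simp [subF, self_mem_subF])
  · intro B h
    have := subF_trans X _ h
    constructor
    · exact this (by simp [subF, self_mem_subF])
    · exact this (by simp [subF, self_mem_subF])
  · intro h
    exact subF_trans X _ h (by simp [subF, self_mem_subF])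
  · intro h
    exact subF_trans X _ h (by simp [subF, self_mem_subF])

lemma Sig_subset {S : Set Fml} {B : Fml} (hS : ClosedSet S) (hB : B ∈ S) :
    Sig B ⊆ S := Set.sInter_subset_of_mem ⟨hS, hB⟩

lemma Sig_closed (B : Fml) : ClosedSet (Sig B) := by
  refine ⟨?_, ?_, ?_, ?_, ?_⟩
  · intro A C h
    exact ⟨fun S hS => (hS.1.1 A C (h S hS)).1, fun S hS => (hS.1.1 A C (h S hS)).2⟩
  · intro A C h
    exact ⟨fun S hS => (hS.1.2.1 A C (h S hS)).1, fun S hS => (hS.1.2.1 A C (h S hS)).2⟩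
  · intro A C h
    exact ⟨fun S hS => (hS.1.2.2.1 A C (h S hS)).1, fun S hS => (hS.1.2.2.1 A C (h S hS)).2⟩
  · intro A h
    exact fun S hS => hS.1.2.2.2.1 A (h S hS)
  · intro A h
    exact fun S hS => hS.1.2.2.2.2 A (h S hS)

lemma Sig_finite (B : Fml) : (Sig B).Finite :=
  (subF B).finite_toSet.subset (Sig_subset (subF_closed B) (self_mem_subF B))

lemma len_closed (n : ℕ) : ClosedSet {C : Fml | C.len ≤ n} := by
  refine ⟨?_, ?_, ?_, ?_, ?_⟩ <;> intro A <;>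
    first
    | (intro B h; simp only [Set.mem_setOf_eq, Fml.len] at *; omega)
    | (intro h; simp only [Set.mem_setOf_eq, Fml.len] at *; omega)

lemma mem_Sig_len {B C : Fml} (h : C ∈ Sig B) : C.len ≤ B.len :=
  Sig_subset (len_closed B.len) (show B.len ≤ B.len from le_refl _) h

theorem circSet_properties (A : Fml) (Γ : Set Fml) (hΓ : Γ ⊆ Sig A) :
    ClosedSet (circSet Γ) ∧
    (ClosedSet Γ → circSet Γ ⊆ Γ ∧ (Γ.Nonempty → (circSet Γ).ncard < Γ.ncard)) := by
  have hmem : ∀ x, x ∈ circSet Γ ↔ ∃ B, (Fml.box B ∈ Γ ∨ Fml.dia B ∈ Γ) ∧ x ∈ Sig B := by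
    intro x; simp [circSet]
  constructor
  · refine ⟨?_, ?_, ?_, ?_, ?_⟩
    · intro X Y h
      obtain ⟨B, hB, hX⟩ := (hmem _).1 h
      have := (Sig_closed B).1 X Y hX
      exact ⟨(hmem _).2 ⟨B, hB, this.1⟩, (hmem _).2 ⟨B, hB, this.2⟩⟩
    · intro X Y h
      obtain ⟨B, hB, hX⟩ := (hmem _).1 h
      have := (Sig_closed B).2.1 X Y hX
      exact ⟨(hmem _).2 ⟨B, hB, this.1⟩, (hmem _).2 ⟨B, hB, this.2⟩⟩
    · intro X Y h
      obtain ⟨B, hB, hX⟩ := (hmem _).1 h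
      have := (Sig_closed B).2.2.1 X Y hX
      exact ⟨(hmem _).2 ⟨B, hB, this.1⟩, (hmem _).2 ⟨B, hB, this.2⟩⟩
    · intro X h
      obtain ⟨B, hB, hX⟩ := (hmem _).1 h
      exact (hmem _).2 ⟨B, hB, (Sig_closed B).2.2.2.1 X hX⟩
    · intro X h
      obtain ⟨B, hB, hX⟩ := (hmem _).1 h
      exact (hmem _).2 ⟨B, hB, (Sig_closed B).2.2.2.2 X hX⟩
  · intro hc
    have hsub : circSet Γ ⊆ Γ := by
      intro x hx
      obtain ⟨B, hB, hxB⟩ := (hmem _).1 hx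
      have hBΓ : B ∈ Γ := by
        rcases hB with h | h
        · exact hc.2.2.2.1 B h
        · exact hc.2.2.2.2 B h
      exact Sig_subset hc hBΓ hxB
    refine ⟨hsub, ?_⟩
    intro hne
    have hΓfin : Γ.Finite := (Sig_finite A).subset hΓ
    obtain ⟨C, hCΓ, hmax⟩ := Set.exists_max_image Γ Fml.len hΓfin hne
    have hCnot : C ∉ circSet Γ := by
      intro h
      obtain ⟨B, hB, hCB⟩ := (hmem _).1 h
      have h1 : C.len ≤ B.len := mem_Sig_len hCB
      have h2 : B.len < C.len := by
        rcases hB with h | h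
        · have := hmax _ h; simp [Fml.len] at this; omega
        · have := hmax _ h; simp [Fml.len] at this; omega
      omega
    exact Set.ncard_lt_ncard ⟨hsub, fun h => hCnot (h hCΓ)⟩ hΓfin
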